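/- arXiv:2303.09524 — 3 statements merged into one kernel-verified Lean document; each statement's English description precedes it below -/
import Mathlib

section
/- Let b_O = [x1,x2] × [y1,y2] be an axis-parallel rectangle with aspect ratio at most 3 (i.e., max(x2-x1, y2-y1) ≤ 3·min(x2-x1, y2-y1)), and let b_I ⊆ b_O be a sticky inner rectangle: for each side, in each dimension, the distance from b_I to the boundary of b_O is either 0 or at least the width of b_I in that dimension, and b_I also has aspect ratio at most 3. Let R be one of the rectangles of the partition of b_O induced by the four lines through the edges of b_I that shares a horizontal edge with b_I. Then the width w and height h of R satisfy w/h ≤ 3. -/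
/-- let `b_O = [x1,x2] × [y1,y2]` have aspect ratio at most 3, and
`b_I = [u1,u2] × [v1,v2] ⊆ b_O` be a sticky inner rectangle of aspect ratio at
most 3. If `R = [u1,u2] × [v2,y2]` is a (nondegenerate) rectangle of the
partition of `b_O` sharing a horizontal edge with `b_I`, then its width `w` and
height `h` satisfy `w ≤ 3 h`. -/
theorem sticky_region_aspect_ratio
    (x1 x2 y1 y2 u1 u2 v1 v2 : ℝ)
    (hxO : x1 ≤ x2) (hyO : y1 ≤ y2)
    (hu1 : x1 ≤ u1) (hu2 : u2 ≤ x2) (hv1 : y1 ≤ v1) (hv2 : v2 ≤ y2)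
    (hu : u1 ≤ u2) (hv : v1 ≤ v2)
    -- aspect ratio of b_O at most 3
    (hO1 : x2 - x1 ≤ 3 * (y2 - y1)) (hO2 : y2 - y1 ≤ 3 * (x2 - x1))
    -- aspect ratio of b_I at most 3
    (hI1 : u2 - u1 ≤ 3 * (v2 - v1)) (hI2 : v2 - v1 ≤ 3 * (u2 - u1))
    -- stickiness in the y-dimension
    (hsticky_bot : v1 = y1 ∨ v1 - y1 ≥ v2 - v1)
    (hsticky_top : v2 = y2 ∨ y2 - v2 ≥ v2 - v1)
    -- R = [u1,u2] × [v2,y2] is nondegenerate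
    (hR : v2 < y2) :
    u2 - u1 ≤ 3 * (y2 - v2) := by
  rcases hsticky_top with h | h
  · linarith
  · linarith
end

section
/- (2-competitiveness of the interval greedy) Consider online set cover with a fixed family of closed intervals on the real line and points arriving online. The algorithm that, upon arrival of an uncovered point p, selects both the interval covering p with the rightmost right endpoint and the interval covering p with the leftmost left endpoint, produces a feasible cover of size at most 2·|OPT|, where OPT is any feasible set cover of all arrived points. -/
/-- the online interval set cover algorithm that, for every
arriving point not yet covered, selects both the interval (from the fixed
family `F`) covering it with the leftmost left endpoint and the one with the
rightmost right endpoint, maintains a feasible cover of size at most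
`2 · |OPT|`. Intervals are encoded by their endpoint pairs. -/
theorem interval_greedy_two_competitive
    (F : Finset (ℝ × ℝ))
    (n : ℕ) (p : Fin n → ℝ)
    (hinst : ∀ t : Fin n, ∃ I ∈ F, p t ∈ Set.Icc I.1 I.2)
    (L R : ℝ → ℝ × ℝ)
    (hL : ∀ x : ℝ, (∃ I ∈ F, x ∈ Set.Icc I.1 I.2) →
      L x ∈ F ∧ x ∈ Set.Icc (L x).1 (L x).2 ∧
        ∀ I ∈ F, x ∈ Set.Icc I.1 I.2 → (L x).1 ≤ I.1)
    (hR : ∀ x : ℝ, (∃ I ∈ F, x ∈ Set.Icc I.1 I.2) →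
      R x ∈ F ∧ x ∈ Set.Icc (R x).1 (R x).2 ∧
        ∀ I ∈ F, x ∈ Set.Icc I.1 I.2 → I.2 ≤ (R x).2)
    (sol : ℕ → Finset (ℝ × ℝ))
    (hsol0 : sol 0 = ∅)
    (hsolstep : ∀ t : Fin n,
      ((∃ I ∈ sol t.val, p t ∈ Set.Icc I.1 I.2) → sol (t.val + 1) = sol t.val) ∧
      ((¬ ∃ I ∈ sol t.val, p t ∈ Set.Icc I.1 I.2) →
        sol (t.val + 1) = sol t.val ∪ {L (p t), R (p t)})) :
    (∀ t : Fin n, ∃ I ∈ sol n, p t ∈ Set.Icc I.1 I.2) ∧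
    (∀ OPT ⊆ F, (∀ t : Fin n, ∃ I ∈ OPT, p t ∈ Set.Icc I.1 I.2) →
      (sol n).card ≤ 2 * OPT.card) := by
  classical
  have hmono : ∀ m : ℕ, m < n → sol m ⊆ sol (m + 1) := by
    intro m hm
    rcases hsolstep ⟨m, hm⟩ with ⟨h1, h2⟩
    by_cases h : ∃ I ∈ sol m, p ⟨m, hm⟩ ∈ Set.Icc I.1 I.2
    · rw [h1 h]
    · rw [h2 h]; exact Finset.subset_union_left
  have hmono' : ∀ b ≤ n, ∀ a ≤ b, sol a ⊆ sol b := by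
    intro b
    induction b with
    | zero => intro _ a ha; have : a = 0 := Nat.le_zero.mp ha; simp [this]
    | succ k ih =>
      intro hbn a ha
      rcases Nat.lt_succ_iff_lt_or_eq.mp (Nat.lt_succ_of_le ha) with h | h
      · exact Finset.Subset.trans (ih (by omega) a (by omega)) (hmono k (by omega))
      · subst h; exact Finset.Subset.refl _
  have hcov : ∀ t : Fin n, ∃ I ∈ sol (t.val + 1), p t ∈ Set.Icc I.1 I.2 := by
    intro t
    rcases hsolstep t with ⟨h1, h2⟩
    by_cases h : ∃ I ∈ sol t.val, p t ∈ Set.Icc I.1 I.2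
    · rw [h1 h]; exact h
    · rw [h2 h]
      obtain ⟨hLF, hLmem, _⟩ := hL (p t) (hinst t)
      exact ⟨L (p t), by simp, hLmem⟩
  set S : Finset (Fin n) :=
    Finset.univ.filter (fun t : Fin n => ¬ ∃ I ∈ sol t.val, p t ∈ Set.Icc I.1 I.2) with hS
  have hcard : ∀ m ≤ n, (sol m).card ≤ 2 * (S.filter (fun t => t.val < m)).card := by
    intro m
    induction m with
    | zero => intro _; simp [hsol0]
    | succ k ih =>
      intro hkn
      have hk : k < n := by omega
      rcases hsolstep ⟨k, hk⟩ with ⟨h1, h2⟩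
      simp only [Fin.val_mk] at h1 h2
      have hsub : S.filter (fun t => t.val < k) ⊆ S.filter (fun t => t.val < k + 1) := by
        intro t ht
        rw [Finset.mem_filter] at ht ⊢
        exact ⟨ht.1, by omega⟩
      by_cases h : ∃ I ∈ sol k, p ⟨k, hk⟩ ∈ Set.Icc I.1 I.2
      · rw [h1 h]
        have := Finset.card_le_card hsub
        have := ih (by omega)
        omega
      · rw [h2 h]
        have hkS : (⟨k, hk⟩ : Fin n) ∈ S := by
          rw [hS, Finset.mem_filter]
          exact ⟨Finset.mem_univ _, h⟩
        have hfilt : S.filter (fun t => t.val < k + 1)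
            = insert (⟨k, hk⟩ : Fin n) (S.filter (fun t => t.val < k)) := by
          ext t
          simp only [Finset.mem_filter, Finset.mem_insert]
          constructor
          · rintro ⟨htS, hlt⟩
            rcases Nat.lt_succ_iff_lt_or_eq.mp hlt with h' | h'
            · exact Or.inr ⟨htS, h'⟩
            · exact Or.inl (Fin.ext h')
          · rintro (rfl | ⟨htS, hlt⟩)
            · exact ⟨hkS, by simp⟩
            · exact ⟨htS, Nat.lt_succ_of_lt hlt⟩
        have hnm : (⟨k, hk⟩ : Fin n) ∉ S.filter (fun t => t.val < k) := by
          rw [Finset.mem_filter]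
          rintro ⟨-, hlt⟩
          exact absurd hlt (by simp)
        rw [hfilt, Finset.card_insert_of_notMem hnm]
        have h2card : ({L (p ⟨k, hk⟩), R (p ⟨k, hk⟩)} : Finset (ℝ × ℝ)).card ≤ 2 := by
          refine le_trans (Finset.card_insert_le _ _) ?_
          simp
        have hu := Finset.card_union_le (sol k)
          ({L (p ⟨k, hk⟩), R (p ⟨k, hk⟩)} : Finset (ℝ × ℝ))
        have hik := ih (by omega)
        omega
  constructor
  · intro t
    obtain ⟨I, hI, hpI⟩ := hcov t
    exact ⟨I, hmono' n le_rfl (t.val + 1) t.isLt hI, hpI⟩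
  · intro OPT hOPTsub hOPTcov
    choose f hf1 hf2 using hOPTcov
    have key : ∀ t s : Fin n, t ∈ S → s ∈ S → t.val < s.val → f t ≠ f s := by
      intro t s ht hs hts heq
      rw [hS, Finset.mem_filter] at ht hs
      obtain ⟨hLF, hLmem, hLmin⟩ := hL (p t) (hinst t)
      obtain ⟨hRF, hRmem, hRmax⟩ := hR (p t) (hinst t)
      have hstep := (hsolstep t).2 ht.2
      have hsubst : sol (t.val + 1) ⊆ sol s.val :=
        hmono' s.val (le_of_lt s.isLt) (t.val + 1) hts
      have hLin : L (p t) ∈ sol s.val := hsubst (by rw [hstep]; simp)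
      have hRin : R (p t) ∈ sol s.val := hsubst (by rw [hstep]; simp)
      have hps : p s ∈ Set.Icc (f t).1 (f t).2 := heq ▸ hf2 s
      have hftF : f t ∈ F := hOPTsub (hf1 t)
      apply hs.2
      by_cases hcmp : p s ≤ p t
      · exact ⟨L (p t), hLin,
          ⟨le_trans (hLmin (f t) hftF (hf2 t)) hps.1, le_trans hcmp hLmem.2⟩⟩
      · exact ⟨R (p t), hRin,
          ⟨le_trans hRmem.1 (le_of_not_ge hcmp), le_trans hps.2 (hRmax (f t) hftF (hf2 t))⟩⟩
    have hSO : S.card ≤ OPT.card := by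
      apply Finset.card_le_card_of_injOn f (fun t _ => hf1 t)
      intro t ht s hs heq
      by_contra hne
      have hne' : t.val ≠ s.val := fun h => hne (Fin.ext h)
      rcases lt_or_gt_of_ne hne' with h | h
      · exact key t s ht hs h heq
      · exact key s t hs ht h heq.symm
    have hall : S.filter (fun t => t.val < n) = S := by
      apply Finset.filter_true_of_mem; intro t _; exact t.isLt
    have := hcard n le_rfl
    rw [hall] at this
    omega
end

section
/- (Each cell is activated at most once) In the online hitting set algorithm for squares, when a quad-tree cell C is activated, the algorithm adds to its solution the points of P ∩ C closest to each of the four edges of C (bottom, top, left, right). Claim: if C was activated for a square S' and later a square S is inserted that contains an edge e of C (say the bottom edge) and contains some point of P ∩ C, then S already contains the previously selected point p_b of P ∩ C closest to the bottom edge of C; hence C is never activated twice. -/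
/-- a cell is never activated twice. Let `C = [x1,x2] × [y1,y2]`
be a square cell, `PC` the finite set of input points inside `C`, and `p_b ∈ PC`
a point with minimal `y`-coordinate (the point closest to the bottom edge,
selected when `C` was activated for an earlier square). If an axis-parallel
square `S = [a, a+s] × [b, b+s]` contains the entire bottom edge of `C` and
contains some point `q ∈ PC`, then `S` already contains `p_b`; hence `C` cannot
be activated again. -/
theorem cell_activated_at_most_once
    (x1 x2 y1 y2 : ℝ) (hx : x1 ≤ x2) (hy : y1 ≤ y2)
    (hsqcell : x2 - x1 = y2 - y1)
    (PC : Finset (ℝ × ℝ))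
    (hPC : ∀ pt ∈ PC, pt ∈ Set.Icc x1 x2 ×ˢ Set.Icc y1 y2)
    (pb : ℝ × ℝ) (hpb : pb ∈ PC)
    (hpbmin : ∀ pt ∈ PC, pb.2 ≤ pt.2)
    (a b s : ℝ) (hs : 0 ≤ s)
    -- S contains the bottom edge of C
    (hbe : Set.Icc x1 x2 ×ˢ ({y1} : Set ℝ) ⊆ Set.Icc a (a + s) ×ˢ Set.Icc b (b + s))
    (q : ℝ × ℝ) (hq : q ∈ PC)
    (hqS : q ∈ Set.Icc a (a + s) ×ˢ Set.Icc b (b + s)) :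
    pb ∈ Set.Icc a (a + s) ×ˢ Set.Icc b (b + s) := by
  obtain ⟨⟨hpx1, hpx2⟩, hpy1, hpy2⟩ := hPC pb hpb
  have hfoot : ((pb.1, y1) : ℝ × ℝ) ∈ Set.Icc a (a + s) ×ˢ Set.Icc b (b + s) :=
    hbe ⟨⟨hpx1, hpx2⟩, rfl⟩
  obtain ⟨⟨ha1, ha2⟩, hb1, _⟩ := hfoot
  exact ⟨⟨ha1, ha2⟩, le_trans hb1 hpy1, le_trans (hpbmin q hq) hqS.2.2⟩
end
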